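/- Let f(x,t) = 2t / (π (t² + x²)) for x > 0, t > 0 be the folded Cauchy density, and define the n-fold composed density recursively by q₁(x,t) = f(x,t) and q_{k+1}(x,t) = ∫₀^∞ q_k(x,s) f(s,t) ds. Then for every n ≥ 1, every t > 0 and every real η with 0 < η < 2, one has ∫₀^∞ x^(η−1) q_n(x,t) dx = t^(η−1) / sin^n(η π / 2), which equals ( ∫₀^∞ x^(η−1) f(x, t^(1/n)) dx )^n; hence the n-fold iterated folded Cauchy process |C¹(|C²(…|Cⁿ(t)|…)|)| has the same distribution as the product ∏_{j=1}^n |Cʲ(t^(1/n))| of n independent folded Cauchy processes. -/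

import Mathlib

/-!
Writing `1/(b + x²) = ∫₀^∞ e^{-(b + x²)u} du` and exchanging the integrals turns the Mellin
transform of the folded Cauchy density into a Gaussian integral in `x` followed by a Laplace
integral in `u`; their product `Γ(η/2) Γ(1 - η/2)` becomes `π / sin(ηπ/2)` by the reflection
formula.
By Tonelli, the Mellin transform of `q_{k+1}(·, t)` is `∫₀^∞ f(s, t) 𝓜q_k(·, s)(η) ds`, so each
composition contributes one more factor `1 / sin(ηπ/2)`.

All exchanges are done with lower Lebesgue integrals, where they need no integrability. The
Bochner integral defining `q_{k+1}(x, t)` agrees with the lower integral wherever the latter is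
finite, which holds for almost every `x` because the weighted lower integral is finite.
-/

open MeasureTheory

/-- The folded Cauchy density `f(x,t) = 2t/(π(t²+x²))` for `x > 0`. -/
noncomputable def fC (x t : ℝ) : ℝ := 2 * t / (Real.pi * (t ^ 2 + x ^ 2))

/-- The `(k+1)`-fold composed folded Cauchy density:
`q₁ = f` and `q_{k+1}(x,t) = ∫₀^∞ q_k(x,s) f(s,t) ds`. -/
noncomputable def qC : ℕ → ℝ → ℝ → ℝ
  | 0 => fC
  | (k + 1) => fun x t => ∫ s in Set.Ioi (0:ℝ), qC k x s * fC s t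

open Set Real
open scoped ENNReal

theorem lintegral_rpow_mul_exp_neg_mul_rpow {p q b : ℝ} (hp : 0 < p) (hq : -1 < q) (hb : 0 < b) :
    ∫⁻ x in Ioi 0, ENNReal.ofReal (x ^ q * exp (-b * x ^ p)) =
      ENNReal.ofReal (b ^ (-(q + 1) / p) * (1 / p) * Gamma ((q + 1) / p)) := by
  rw [← integral_rpow_mul_exp_neg_mul_rpow hp hq hb]
  exact (ofReal_integral_eq_lintegral_ofReal (integrableOn_rpow_mul_exp_neg_mul_rpow hq hp hb)
    (ae_restrict_of_forall_mem measurableSet_Ioi fun x (hx : 0 < x) => by positivity)).symm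

theorem ofReal_inv_eq_lintegral_exp_neg_mul {c : ℝ} (hc : 0 < c) :
    ENNReal.ofReal c⁻¹ = ∫⁻ u in Ioi 0, ENNReal.ofReal (exp (-c * u)) := by
  simpa [rpow_neg_one] using (lintegral_rpow_mul_exp_neg_mul_rpow one_pos neg_one_lt_zero hc).symm

theorem lintegral_rpow_div_add_sq {η b : ℝ} (hη₀ : 0 < η) (hη₂ : η < 2) (hb : 0 < b) :
    ∫⁻ x in Ioi 0, ENNReal.ofReal (x ^ (η - 1) / (b + x ^ 2)) =
      ENNReal.ofReal (b ^ (η / 2 - 1) * (π / 2) / sin (η * π / 2)) := by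
  calc ∫⁻ x in Ioi 0, ENNReal.ofReal (x ^ (η - 1) / (b + x ^ 2))
      = ∫⁻ x in Ioi 0, ∫⁻ u in Ioi 0, ENNReal.ofReal (exp (-b * u))
          * ENNReal.ofReal (x ^ (η - 1) * exp (-u * x ^ (2 : ℝ))) := by
        refine setLIntegral_congr_fun measurableSet_Ioi fun x (hx : 0 < x) => ?_
        rw [div_eq_mul_inv, ENNReal.ofReal_mul (rpow_nonneg hx.le _),
          ofReal_inv_eq_lintegral_exp_neg_mul (by positivity),
          ← lintegral_const_mul' _ _ ENNReal.ofReal_ne_top]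
        refine lintegral_congr fun u => ?_
        rw [← ENNReal.ofReal_mul (by positivity), ← ENNReal.ofReal_mul (by positivity), rpow_two,
          show -(b + x ^ 2) * u = -b * u + -u * x ^ 2 by ring, exp_add]
        ring_nf
    _ = ∫⁻ u in Ioi 0, ∫⁻ x in Ioi 0, ENNReal.ofReal (exp (-b * u))
          * ENNReal.ofReal (x ^ (η - 1) * exp (-u * x ^ (2 : ℝ))) :=
        lintegral_lintegral_swap (by fun_prop)
    _ = ∫⁻ u in Ioi 0, ENNReal.ofReal (Gamma (η / 2) / 2)
          * ENNReal.ofReal (u ^ (-(η / 2)) * exp (-b * u)) := by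
        refine setLIntegral_congr_fun measurableSet_Ioi fun u hu => ?_
        rw [lintegral_const_mul' _ _ ENNReal.ofReal_ne_top,
          lintegral_rpow_mul_exp_neg_mul_rpow two_pos (by linarith) hu,
          ← ENNReal.ofReal_mul (by positivity), ← ENNReal.ofReal_mul (by positivity)]
        ring_nf
    _ = ENNReal.ofReal (Gamma (η / 2) / 2 * (b ^ (η / 2 - 1) * Gamma (1 - η / 2))) := by
        have laplace := lintegral_rpow_mul_exp_neg_mul_rpow one_pos (q := -(η / 2)) (by linarith) hb
        simp only [rpow_one] at laplace
        rw [lintegral_const_mul' _ _ ENNReal.ofReal_ne_top, laplace,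
          ← ENNReal.ofReal_mul (div_nonneg (Gamma_pos_of_pos (by positivity)).le two_pos.le)]
        ring_nf
    _ = _ := by
        have reflection := Gamma_mul_Gamma_one_sub (η / 2)
        rw [show π * (η / 2) = η * π / 2 by ring] at reflection
        rw [show Gamma (η / 2) / 2 * (b ^ (η / 2 - 1) * Gamma (1 - η / 2))
          = b ^ (η / 2 - 1) * (Gamma (η / 2) * Gamma (1 - η / 2)) / 2 by ring, reflection]
        ring_nf

theorem sin_mul_pi_div_two_pos {η : ℝ} (hη₀ : 0 < η) (hη₂ : η < 2) : 0 < sin (η * π / 2) :=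
  sin_pos_of_pos_of_lt_pi (by positivity) (by nlinarith [pi_pos])

theorem fC_nonneg (x : ℝ) {t : ℝ} (ht : 0 ≤ t) : 0 ≤ fC x t := by
  unfold fC; positivity

theorem measurable_fC : Measurable (Function.uncurry fC) := by
  unfold Function.uncurry fC; fun_prop

theorem lintegral_rpow_mul_fC {η t : ℝ} (hη₀ : 0 < η) (hη₂ : η < 2) (ht : 0 < t) :
    ∫⁻ x in Ioi 0, ENNReal.ofReal (x ^ (η - 1) * fC x t) =
      ENNReal.ofReal (t ^ (η - 1) / sin (η * π / 2)) := by
  have hfC : ∀ x, x ^ (η - 1) * fC x t = 2 * t / π * (x ^ (η - 1) / (t ^ 2 + x ^ 2)) := by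
    intro x; unfold fC; field_simp
  simp_rw [hfC, ENNReal.ofReal_mul (by positivity : 0 ≤ 2 * t / π)]
  rw [lintegral_const_mul' _ _ ENNReal.ofReal_ne_top,
    lintegral_rpow_div_add_sq hη₀ hη₂ (by positivity),
    ← ENNReal.ofReal_mul (by positivity)]
  have hpow : (t ^ 2) ^ (η / 2 - 1) * t = t ^ (η - 1) := by
    rw [← rpow_natCast, ← rpow_mul ht.le, ← rpow_add_one ht.ne']
    ring_nf
  congr 1
  rw [← hpow]
  field_simp

theorem qC_nonneg (k : ℕ) (x : ℝ) {t : ℝ} (ht : 0 ≤ t) : 0 ≤ qC k x t := by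
  induction k generalizing t with
  | zero => exact fC_nonneg x ht
  | succ k ih =>
    exact setIntegral_nonneg measurableSet_Ioi fun s hs => mul_nonneg (ih hs.le) (fC_nonneg s ht)

theorem measurable_qC (k : ℕ) : Measurable (Function.uncurry (qC k)) := by
  induction k with
  | zero => exact measurable_fC
  | succ k ih =>
    have hg : Measurable fun p : (ℝ × ℝ) × ℝ => qC k p.1.1 p.2 * fC p.2 p.1.2 :=
      (ih.comp (measurable_fst.fst.prodMk measurable_snd)).mul
        (measurable_fC.comp (measurable_snd.prodMk measurable_fst.snd))
    exact (hg.stronglyMeasurable.integral_prod_right' (ν := volume.restrict (Ioi 0))).measurable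

theorem qC_succ (k : ℕ) (x t : ℝ) : qC (k + 1) x t = ∫ s in Ioi 0, qC k x s * fC s t := rfl

theorem ofReal_qC_succ {k : ℕ} {x t : ℝ} (ht : 0 ≤ t)
    (hfin : ∫⁻ s in Ioi 0, ENNReal.ofReal (qC k x s * fC s t) ≠ ∞) :
    ENNReal.ofReal (qC (k + 1) x t) = ∫⁻ s in Ioi 0, ENNReal.ofReal (qC k x s * fC s t) := by
  have hmeas : Measurable fun s => qC k x s * fC s t :=
    ((measurable_qC k).comp measurable_prodMk_left).mul
      (measurable_fC.comp measurable_prodMk_right)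
  rw [qC_succ, integral_eq_lintegral_of_nonneg_ae
    (ae_restrict_of_forall_mem measurableSet_Ioi fun s hs => mul_nonneg (qC_nonneg k x hs.le)
      (fC_nonneg s ht)) hmeas.aestronglyMeasurable, ENNReal.ofReal_toReal hfin]

theorem measurable_ofReal_qC_mul_fC (k : ℕ) (t : ℝ) :
    Measurable fun p : ℝ × ℝ => ENNReal.ofReal (qC k p.1 p.2 * fC p.2 t) :=
  ENNReal.measurable_ofReal.comp ((measurable_qC k).mul
    (measurable_fC.comp (measurable_snd.prodMk measurable_const)))

theorem lintegral_rpow_mul_lintegral_qC_mul_fC (η : ℝ) (k : ℕ) {t : ℝ} (ht : 0 ≤ t) :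
    ∫⁻ x in Ioi 0, ENNReal.ofReal (x ^ (η - 1)) *
        ∫⁻ s in Ioi 0, ENNReal.ofReal (qC k x s * fC s t) =
      ∫⁻ s in Ioi 0, ENNReal.ofReal (fC s t) *
        ∫⁻ x in Ioi 0, ENNReal.ofReal (x ^ (η - 1) * qC k x s) := by
  simp_rw [← lintegral_const_mul' _ _ ENNReal.ofReal_ne_top]
  rw [lintegral_lintegral_swap ((ENNReal.measurable_ofReal.comp (by fun_prop)).mul
    (measurable_ofReal_qC_mul_fC k t)).aemeasurable]
  refine setLIntegral_congr_fun measurableSet_Ioi fun s _ => ?_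
  refine setLIntegral_congr_fun measurableSet_Ioi fun x (hx : 0 < x) => ?_
  rw [← ENNReal.ofReal_mul (by positivity), ← ENNReal.ofReal_mul (fC_nonneg s ht)]
  ring_nf

theorem lintegral_rpow_mul_qC {η : ℝ} (hη₀ : 0 < η) (hη₂ : η < 2) (k : ℕ) {t : ℝ} (ht : 0 < t) :
    ∫⁻ x in Ioi 0, ENNReal.ofReal (x ^ (η - 1) * qC k x t) =
      ENNReal.ofReal (t ^ (η - 1) / sin (η * π / 2) ^ (k + 1)) := by
  induction k generalizing t with
  | zero => rw [zero_add, pow_one]; exact lintegral_rpow_mul_fC hη₀ hη₂ ht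
  | succ k ih =>
    have hS := sin_mul_pi_div_two_pos hη₀ hη₂
    set F : ℝ → ℝ≥0∞ := fun x => ∫⁻ s in Ioi 0, ENNReal.ofReal (qC k x s * fC s t)
    have hF : ∫⁻ x in Ioi 0, ENNReal.ofReal (x ^ (η - 1)) * F x =
        ENNReal.ofReal (t ^ (η - 1) / sin (η * π / 2) ^ (k + 2)) := by
      calc ∫⁻ x in Ioi 0, ENNReal.ofReal (x ^ (η - 1)) * F x
          = ∫⁻ s in Ioi 0, ENNReal.ofReal (sin (η * π / 2) ^ (k + 1))⁻¹ *
              ENNReal.ofReal (s ^ (η - 1) * fC s t) := by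
            rw [lintegral_rpow_mul_lintegral_qC_mul_fC η k ht.le]
            refine setLIntegral_congr_fun measurableSet_Ioi fun s (hs : 0 < s) => ?_
            rw [ih hs, ← ENNReal.ofReal_mul (fC_nonneg s ht.le),
              ← ENNReal.ofReal_mul (by positivity)]
            ring_nf
        _ = _ := by
            rw [lintegral_const_mul' _ _ ENNReal.ofReal_ne_top, lintegral_rpow_mul_fC hη₀ hη₂ ht,
              ← ENNReal.ofReal_mul (by positivity)]
            ring_nf
    have hF_ne_top : ∀ᵐ x ∂volume.restrict (Ioi 0), F x ≠ ∞ := by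
      have hFmeas : Measurable F := (measurable_ofReal_qC_mul_fC k t).lintegral_prod_right'
      filter_upwards [ae_lt_top (f := fun x => ENNReal.ofReal (x ^ (η - 1)) * F x)
          (by fun_prop) (hF ▸ ENNReal.ofReal_ne_top),
        ae_restrict_mem measurableSet_Ioi] with x hx (hx0 : 0 < x) hFx
      rw [hFx, ENNReal.mul_top (by simpa using rpow_pos_of_pos hx0 _)] at hx
      exact lt_irrefl _ hx
    rw [← hF]
    refine lintegral_congr_ae ?_
    filter_upwards [hF_ne_top, ae_restrict_mem measurableSet_Ioi] with x hx (hx0 : 0 < x)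
    rw [ENNReal.ofReal_mul (rpow_nonneg hx0.le _), ofReal_qC_succ ht.le hx]

theorem integral_rpow_mul_qC {η : ℝ} (hη₀ : 0 < η) (hη₂ : η < 2) (k : ℕ) {t : ℝ} (ht : 0 < t) :
    ∫ x in Ioi 0, x ^ (η - 1) * qC k x t = t ^ (η - 1) / sin (η * π / 2) ^ (k + 1) := by
  have hS := sin_mul_pi_div_two_pos hη₀ hη₂
  have hmeas : Measurable fun x => x ^ (η - 1) * qC k x t :=
    (by fun_prop : Measurable fun x : ℝ => x ^ (η - 1)).mul
      ((measurable_qC k).comp measurable_prodMk_right)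
  rw [integral_eq_lintegral_of_nonneg_ae (ae_restrict_of_forall_mem measurableSet_Ioi
      fun x (hx : 0 < x) => mul_nonneg (by positivity) (qC_nonneg k x ht.le))
    hmeas.aestronglyMeasurable, lintegral_rpow_mul_qC hη₀ hη₂ k ht,
    ENNReal.toReal_ofReal (by positivity)]

/-- the Mellin transform of the `n`-fold iterated folded Cauchy density is
`t^(η−1)/sinⁿ(ηπ/2)`, which equals the `n`-th power of the Mellin transform of the folded
Cauchy density at time `t^(1/n)`; hence `|C¹(|C²(…|Cⁿ(t)|…)|)| ≟ ∏ⱼ |Cʲ(t^(1/n))|`. -/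
theorem stmt_9 (n : ℕ) (hn : 1 ≤ n) (t η : ℝ) (ht : 0 < t)
    (hη₀ : 0 < η) (hη₂ : η < 2) :
    (∫ x in Set.Ioi (0:ℝ), x ^ (η - 1) * qC (n - 1) x t)
      = t ^ (η - 1) / (Real.sin (η * Real.pi / 2)) ^ n
    ∧ (∫ x in Set.Ioi (0:ℝ), x ^ (η - 1) * qC (n - 1) x t)
        = (∫ x in Set.Ioi (0:ℝ), x ^ (η - 1) * fC x (t ^ ((1:ℝ) / n))) ^ n := by
  obtain ⟨k, rfl⟩ : ∃ k, n = k + 1 := ⟨n - 1, by omega⟩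
  rw [add_tsub_cancel_right, integral_rpow_mul_qC hη₀ hη₂ k ht]
  refine ⟨rfl, ?_⟩
  rw [show fC = qC 0 from rfl, integral_rpow_mul_qC hη₀ hη₂ 0 (rpow_pos_of_pos ht _), pow_one,
    div_pow, ← rpow_mul ht.le, ← rpow_mul_natCast ht.le]
  congr 2
  field_simp
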